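/- Let cᵥ > 0 and let χ : ℝ → ℝ be non-decreasing, concave, and bounded above. Then the renormalized total entropy 𝒮_χ, defined by 𝒮_χ(ρ,m,E) = ρ·χ(cᵥ log((E − |m|²/(2ρ))/(cᵥ ρ^γ))) when ρ > 0 and E > |m|²/(2ρ) (with γ = 1 + 1/cᵥ), 𝒮_χ(0,0,E) = 0 for E ≥ 0, and 𝒮_χ = −∞ otherwise, is a concave function on the set {ρ ≥ 0, m ∈ ℝ³, E ≥ 0}. -/

import Mathlib

/-!
With the internal energy `e = E - |m|²/(2ρ)` and the specific entropy
`s(τ, ε) = log τ + cᵥ log ε - cᵥ log cᵥ`, for `ρ, e > 0` one has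
`𝒮_χ(ρ, m, E) = ρ · χ(s(1/ρ, e/ρ))`: the perspective of `χ ∘ s` at `(ρ, (1, e))`.
Both `s` and `χ` are concave and non-decreasing, so `χ ∘ s` and its perspective are concave.
The kinetic energy `|m|²/(2ρ)` is the perspective of the convex `|v|²/2`, so `e` is concave
in `(ρ, m, E)`, and monotonicity of `χ ∘ s` lets the two combine. Against a vacuum state
`(0, 0, E')` the inequality becomes `t · 𝒮_χ(p) ≤ 𝒮_χ(t p + (1 - t)(0, 0, E'))`, which holds
because mixing with vacuum increases both the specific volume and the specific internal energy.
-/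

open scoped Classical in
/-- The renormalized total entropy `𝒮_χ` in conservative variables `(ρ, m, E)`. -/
noncomputable def Sren (cv : ℝ) (χ : ℝ → ℝ) (p : ℝ × EuclideanSpace ℝ (Fin 3) × ℝ) : EReal :=
  if 0 < p.1 ∧ ‖p.2.1‖ ^ 2 / (2 * p.1) < p.2.2 then
    ((p.1 * χ (cv * Real.log ((p.2.2 - ‖p.2.1‖ ^ 2 / (2 * p.1)) / (cv * p.1 ^ (1 + 1 / cv))))
      : ℝ) : EReal)
  else if p.1 = 0 ∧ p.2.1 = 0 then (0 : EReal) else ⊥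

open Set

section Perspective

variable {E : Type*} [AddCommGroup E] [Module ℝ E]

noncomputable def perspective (g : E → ℝ) (p : ℝ × E) : ℝ := p.1 * g (p.1⁻¹ • p.2)

theorem ConvexOn.perspective {s : Set E} {g : E → ℝ} (hg : ConvexOn ℝ s g) :
    ConvexOn ℝ {p : ℝ × E | 0 < p.1 ∧ p.1⁻¹ • p.2 ∈ s} (_root_.perspective g) := by
  have hcombo : ∀ ⦃p q : ℝ × E⦄, 0 < p.1 → 0 < q.1 → ∀ ⦃a b : ℝ⦄, 0 ≤ a → 0 ≤ b → a + b = 1 →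
      0 < (a • p + b • q).1 ∧ a * p.1 / (a • p + b • q).1 + b * q.1 / (a • p + b • q).1 = 1 ∧
      (a • p + b • q).1⁻¹ • (a • p + b • q).2 =
        (a * p.1 / (a • p + b • q).1) • (p.1⁻¹ • p.2) +
          (b * q.1 / (a • p + b • q).1) • (q.1⁻¹ • q.2) := by
    rintro ⟨ρ₁, x₁⟩ ⟨ρ₂, x₂⟩ (hρ₁ : 0 < ρ₁) (hρ₂ : 0 < ρ₂) a b ha hb hab
    simp only [Prod.fst_add, Prod.smul_fst, Prod.snd_add, Prod.smul_snd, smul_eq_mul]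
    have hρ : 0 < a * ρ₁ + b * ρ₂ := convex_Ioi (0 : ℝ) hρ₁ hρ₂ ha hb hab
    refine ⟨hρ, by field_simp, ?_⟩
    rw [smul_add, smul_smul, smul_smul, smul_smul, smul_smul]
    congr 2 <;> field_simp
  refine ⟨?_, ?_⟩
  · rintro p ⟨hp, hps⟩ q ⟨hq, hqs⟩ a b ha hb hab
    obtain ⟨hr, hw, hr'⟩ := hcombo hp hq ha hb hab
    exact ⟨hr, hr' ▸ hg.1 hps hqs (by positivity) (by positivity) hw⟩
  · rintro p ⟨hp, hps⟩ q ⟨hq, hqs⟩ a b ha hb hab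
    obtain ⟨hr, hw, hr'⟩ := hcombo hp hq ha hb hab
    calc (a • p + b • q).1 * g ((a • p + b • q).1⁻¹ • (a • p + b • q).2)
        ≤ (a • p + b • q).1 * ((a * p.1 / (a • p + b • q).1) * g (p.1⁻¹ • p.2) +
            (b * q.1 / (a • p + b • q).1) * g (q.1⁻¹ • q.2)) := by
          rw [hr']
          exact mul_le_mul_of_nonneg_left (hg.2 hps hqs (by positivity) (by positivity) hw) hr.le
      _ = a • _root_.perspective g p + b • _root_.perspective g q := by
          simp only [_root_.perspective, smul_eq_mul]
          field_simp

theorem ConcaveOn.perspective {s : Set E} {g : E → ℝ} (hg : ConcaveOn ℝ s g) :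
    ConcaveOn ℝ {p : ℝ × E | 0 < p.1 ∧ p.1⁻¹ • p.2 ∈ s} (_root_.perspective g) := by
  have h : _root_.perspective (-g) = -_root_.perspective g := by
    ext p
    simp [_root_.perspective]
  rw [← neg_convexOn_iff, ← h]
  exact hg.neg.perspective

end Perspective

theorem convexOn_sq_norm_div {E : Type*} [NormedAddCommGroup E] [NormedSpace ℝ E] :
    ConvexOn ℝ {p : ℝ × E | 0 < p.1} fun p ↦ ‖p.2‖ ^ 2 / (2 * p.1) := by
  have h : ConvexOn ℝ univ fun x : E ↦ ‖x‖ ^ 2 / 2 := by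
    simpa [div_eq_mul_inv, mul_comm] using
      ((convexOn_norm convex_univ).pow (fun _ _ ↦ norm_nonneg _) 2).smul (by norm_num : (0 : ℝ) ≤ 1 / 2)
  have hs : {p : ℝ × E | 0 < p.1} = {p | 0 < p.1 ∧ p.1⁻¹ • p.2 ∈ univ} := by simp
  rw [hs]
  refine h.perspective.congr fun p ⟨hp, _⟩ ↦ ?_
  simp only [perspective, norm_smul, norm_inv, Real.norm_of_nonneg hp.le]
  field_simp

noncomputable def specificEntropy (cv : ℝ) (x : ℝ × ℝ) : ℝ :=
  Real.log x.1 + cv * Real.log x.2 - cv * Real.log cv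

section SpecificEntropy

variable {cv : ℝ}

theorem concaveOn_specificEntropy (hcv : 0 ≤ cv) :
    ConcaveOn ℝ (Ioi 0 ×ˢ Ioi 0) (specificEntropy cv) := by
  refine ⟨(convex_Ioi 0).prod (convex_Ioi 0), fun x hx y hy a b ha hb hab ↦ ?_⟩
  have hlog := strictConcaveOn_log_Ioi.concaveOn
  have h₁ := hlog.2 hx.1 hy.1 ha hb hab
  have h₂ := hlog.2 hx.2 hy.2 ha hb hab
  simp only [specificEntropy, Prod.fst_add, Prod.smul_fst, Prod.snd_add, Prod.smul_snd,
    smul_eq_mul] at h₁ h₂ ⊢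
  linear_combination h₁ + cv * h₂ - cv * Real.log cv * hab

theorem monotoneOn_specificEntropy (hcv : 0 ≤ cv) :
    MonotoneOn (specificEntropy cv) (Ioi 0 ×ˢ Ioi 0) := by
  rintro x ⟨hx₁, hx₂⟩ y - ⟨hxy₁, hxy₂⟩
  unfold specificEntropy
  gcongr

end SpecificEntropy

noncomputable def internalEnergy (p : ℝ × EuclideanSpace ℝ (Fin 3) × ℝ) : ℝ :=
  p.2.2 - ‖p.2.1‖ ^ 2 / (2 * p.1)

section Sren

variable {cv : ℝ} {χ : ℝ → ℝ}

theorem Sren_of_pos (hcv : 0 < cv) {p : ℝ × EuclideanSpace ℝ (Fin 3) × ℝ} (hρ : 0 < p.1)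
    (he : 0 < internalEnergy p) :
    Sren cv χ p = perspective (χ ∘ specificEntropy cv) (p.1, (1, internalEnergy p)) := by
  rw [Sren, if_pos ⟨hρ, sub_pos.1 he⟩, perspective]
  congr 3
  simp only [internalEnergy] at he ⊢
  simp only [specificEntropy, Prod.smul_mk, smul_eq_mul, mul_one]
  rw [Real.log_div he.ne' (by positivity), Real.log_mul hcv.ne' (by positivity),
    Real.log_rpow hρ, Real.log_mul (by positivity) he.ne', Real.log_inv]
  field_simp
  ring

theorem Sren_of_vacuum {p : ℝ × EuclideanSpace ℝ (Fin 3) × ℝ} (hρ : p.1 = 0) (hm : p.2.1 = 0) :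
    Sren cv χ p = 0 := by
  rw [Sren, if_neg (by simp [hρ]), if_pos ⟨hρ, hm⟩]

theorem Sren_ne_bot {p : ℝ × EuclideanSpace ℝ (Fin 3) × ℝ} (h : Sren cv χ p ≠ ⊥) :
    0 < p.1 ∧ 0 < internalEnergy p ∨ p.1 = 0 ∧ p.2.1 = 0 := by
  rw [internalEnergy, sub_pos]
  unfold Sren at h
  split_ifs at h with h₁ h₂
  · exact Or.inl h₁
  · exact Or.inr h₂
  · exact absurd rfl h

theorem internalEnergy_convexCombination_ge {p q : ℝ × EuclideanSpace ℝ (Fin 3) × ℝ}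
    (hp : 0 < p.1) (hq : 0 < q.1) {t : ℝ} (ht₀ : 0 ≤ t) (ht₁ : t ≤ 1) :
    t * internalEnergy p + (1 - t) * internalEnergy q ≤ internalEnergy (t • p + (1 - t) • q) := by
  have h := convexOn_sq_norm_div.2 (x := (p.1, p.2.1)) (y := (q.1, q.2.1)) hp hq ht₀
    (sub_nonneg.2 ht₁) (add_sub_cancel t 1)
  simp only [internalEnergy, Prod.fst_add, Prod.smul_fst, Prod.snd_add, Prod.smul_snd,
    smul_eq_mul] at h ⊢
  linarith

theorem internalEnergy_convexCombination_vacuum {p q : ℝ × EuclideanSpace ℝ (Fin 3) × ℝ}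
    (hq : q.1 = 0) (hm : q.2.1 = 0) {t : ℝ} (ht₀ : 0 < t) :
    internalEnergy (t • p + (1 - t) • q) = t * internalEnergy p + (1 - t) * q.2.2 := by
  simp only [internalEnergy, Prod.fst_add, Prod.smul_fst, Prod.snd_add, Prod.smul_snd,
    smul_eq_mul, hq, hm, smul_zero, add_zero, mul_zero, norm_smul, Real.norm_of_nonneg ht₀.le]
  rcases eq_or_ne p.1 0 with h | h
  · simp [h]
  · field_simp
    ring

theorem inv_smul_one_mk_mem {ρ e : ℝ} (hρ : 0 < ρ) (he : 0 < e) :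
    ρ⁻¹ • ((1 : ℝ), e) ∈ Ioi (0 : ℝ) ×ˢ Ioi (0 : ℝ) :=
  ⟨by simpa using hρ, by simpa using mul_pos (inv_pos.2 hρ) he⟩

theorem Sren_convexCombination_of_pos (hcv : 0 < cv) (hmono : Monotone χ)
    (hconc : ConcaveOn ℝ univ χ) {p q : ℝ × EuclideanSpace ℝ (Fin 3) × ℝ}
    (hp : 0 < p.1) (hep : 0 < internalEnergy p) (hq : 0 < q.1) (heq : 0 < internalEnergy q)
    {t : ℝ} (ht₀ : 0 ≤ t) (ht₁ : t ≤ 1) :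
    (t : EReal) * Sren cv χ p + ((1 - t : ℝ) : EReal) * Sren cv χ q ≤
      Sren cv χ (t • p + (1 - t) • q) := by
  set r := t • p + (1 - t) • q
  set e := t * internalEnergy p + (1 - t) * internalEnergy q
  have hr : r.1 = t * p.1 + (1 - t) * q.1 := rfl
  have hρ : 0 < r.1 := convex_Ioi (0 : ℝ) hp hq ht₀ (sub_nonneg.2 ht₁) (add_sub_cancel t 1)
  have he : 0 < e := convex_Ioi (0 : ℝ) hep heq ht₀ (sub_nonneg.2 ht₁) (add_sub_cancel t 1)
  have her : e ≤ internalEnergy r := internalEnergy_convexCombination_ge hp hq ht₀ ht₁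
  have hs := concaveOn_specificEntropy hcv.le
  have hg : ConcaveOn ℝ (Ioi 0 ×ˢ Ioi 0) (χ ∘ specificEntropy cv) :=
    ⟨hs.1, fun x hx y hy a b ha hb hab ↦
      (hconc.2 trivial trivial ha hb hab).trans (hmono (hs.2 hx hy ha hb hab))⟩
  have hcomb : t • (p.1, ((1 : ℝ), internalEnergy p)) + (1 - t) • (q.1, (1, internalEnergy q)) =
      (r.1, (1, e)) := by
    ext <;> simp [hr, e]
  have hjensen := hg.perspective.2 (x := (p.1, (1, internalEnergy p)))
    (y := (q.1, (1, internalEnergy q))) ⟨hp, inv_smul_one_mk_mem hp hep⟩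
    ⟨hq, inv_smul_one_mk_mem hq heq⟩ ht₀ (sub_nonneg.2 ht₁) (add_sub_cancel t 1)
  rw [hcomb] at hjensen
  rw [Sren_of_pos hcv hp hep, Sren_of_pos hcv hq heq, Sren_of_pos hcv hρ (he.trans_le her)]
  norm_cast
  refine hjensen.trans (mul_le_mul_of_nonneg_left (hmono ?_) hρ.le)
  refine monotoneOn_specificEntropy hcv.le (inv_smul_one_mk_mem hρ he)
    (inv_smul_one_mk_mem hρ (he.trans_le her)) ?_
  exact smul_le_smul_of_nonneg_left (Prod.mk_le_mk.2 ⟨le_rfl, her⟩) (inv_nonneg.2 hρ.le)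

theorem Sren_convexCombination_of_vacuum (hcv : 0 < cv) (hmono : Monotone χ)
    {p q : ℝ × EuclideanSpace ℝ (Fin 3) × ℝ}
    (hp : 0 < p.1) (hep : 0 < internalEnergy p) (hq : q.1 = 0) (hm : q.2.1 = 0) (hE : 0 ≤ q.2.2)
    {t : ℝ} (ht₀ : 0 < t) (ht₁ : t ≤ 1) :
    (t : EReal) * Sren cv χ p + ((1 - t : ℝ) : EReal) * Sren cv χ q ≤
      Sren cv χ (t • p + (1 - t) • q) := by
  set r := t • p + (1 - t) • q
  have hr : r.1 = t * p.1 := by simp [r, hq]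
  have hρ : 0 < t * p.1 := mul_pos ht₀ hp
  have her : t * internalEnergy p ≤ internalEnergy r := by
    rw [internalEnergy_convexCombination_vacuum hq hm ht₀]
    nlinarith
  have he : 0 < internalEnergy r := (mul_pos ht₀ hep).trans_le her
  rw [Sren_of_pos hcv hp hep, Sren_of_vacuum hq hm, Sren_of_pos hcv (hr ▸ hρ) he, mul_zero,
    add_zero]
  norm_cast
  simp only [perspective, hr, ← mul_assoc]
  refine mul_le_mul_of_nonneg_left (hmono ?_) hρ.le
  refine monotoneOn_specificEntropy hcv.le (inv_smul_one_mk_mem hp hep)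
    (inv_smul_one_mk_mem hρ he) ?_
  simp only [Prod.smul_mk, smul_eq_mul, mul_one, Prod.mk_le_mk]
  constructor
  · exact inv_anti₀ hρ (mul_le_of_le_one_left hp.le ht₁)
  · calc p.1⁻¹ * internalEnergy p = (t * p.1)⁻¹ * (t * internalEnergy p) := by field_simp
      _ ≤ (t * p.1)⁻¹ * internalEnergy r := by gcongr

end Sren

theorem Sren_concave_general (cv : ℝ) (hcv : 0 < cv) (χ : ℝ → ℝ)
    (hmono : Monotone χ) (hconc : ConcaveOn ℝ Set.univ χ) :
    ∀ p q : ℝ × EuclideanSpace ℝ (Fin 3) × ℝ,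
      0 ≤ p.1 → 0 ≤ p.2.2 → 0 ≤ q.1 → 0 ≤ q.2.2 →
      ∀ t : ℝ, 0 ≤ t → t ≤ 1 →
      ((t : ℝ) : EReal) * Sren cv χ p + (((1 - t : ℝ)) : EReal) * Sren cv χ q ≤
        Sren cv χ (t • p + (1 - t) • q) := by
  intro p q _ hEp _ hEq t ht₀ ht₁
  rcases ht₀.eq_or_lt with rfl | ht₀
  · simp
  rcases ht₁.eq_or_lt with rfl | ht₁
  · simp
  have ht₁' : 0 < 1 - t := sub_pos.2 ht₁
  rcases eq_or_ne (Sren cv χ p) ⊥ with hp | hp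
  · rw [hp, EReal.mul_bot_of_pos (EReal.coe_pos.2 ht₀), EReal.bot_add]
    exact bot_le
  rcases eq_or_ne (Sren cv χ q) ⊥ with hq | hq
  · rw [hq, EReal.mul_bot_of_pos (EReal.coe_pos.2 ht₁'), EReal.add_bot]
    exact bot_le
  rcases Sren_ne_bot hp with ⟨hρp, hep⟩ | ⟨hρp, hmp⟩ <;>
    rcases Sren_ne_bot hq with ⟨hρq, heq⟩ | ⟨hρq, hmq⟩
  · exact Sren_convexCombination_of_pos hcv hmono hconc hρp hep hρq heq ht₀.le ht₁.le
  · exact Sren_convexCombination_of_vacuum hcv hmono hρp hep hρq hmq hEq ht₀ ht₁.le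
  · rw [add_comm, show t • p + (1 - t) • q = (1 - t) • q + (1 - (1 - t)) • p by
      rw [sub_sub_cancel, add_comm]]
    simpa using Sren_convexCombination_of_vacuum hcv hmono hρq heq hρp hmp hEp ht₁' (by linarith)
  · rw [Sren_of_vacuum hρp hmp, Sren_of_vacuum hρq hmq, Sren_of_vacuum (by simp [hρp, hρq])
      (by simp [hmp, hmq])]
    simp

/-- For `cᵥ > 0` and `χ` non-decreasing, concave, bounded above, the renormalized total
entropy `𝒮_χ` is concave on `{ρ ≥ 0, m ∈ ℝ³, E ≥ 0}`. -/
theorem Sren_concave (cv χinf : ℝ) (hcv : 0 < cv) (χ : ℝ → ℝ)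
    (hmono : Monotone χ) (hconc : ConcaveOn ℝ Set.univ χ) (hbdd : ∀ s : ℝ, χ s ≤ χinf) :
    ∀ p q : ℝ × EuclideanSpace ℝ (Fin 3) × ℝ,
      0 ≤ p.1 → 0 ≤ p.2.2 → 0 ≤ q.1 → 0 ≤ q.2.2 →
      ∀ t : ℝ, 0 ≤ t → t ≤ 1 →
      ((t : ℝ) : EReal) * Sren cv χ p + (((1 - t : ℝ)) : EReal) * Sren cv χ q ≤
        Sren cv χ (t • p + (1 - t) • q) :=
  Sren_concave_general cv hcv χ hmono hconc
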